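/- Let d ≥ 2 and γ ∈ (γ_d, 1/2], where γ_d := (√(3d² − d) − d)/(2d−1). Then there exist n ∈ ℕ and reals β₁ < β₂ < ⋯ < β_n in the interval (1/(1+γ), 1) such that β₁ < 2γ, β_{j+1} < γ + f(β_j) for all 1 ≤ j ≤ n−1, and 1 < γ + f(β_n), where f(β) := d(β − 1/(1+γ))·(1+γ)/γ. -/
import Mathlib
set_option maxHeartbeats 1000000

theorem exponents_choice (d : ℕ) (hd : 2 ≤ d) (γ : ℝ)
    (hγl : (Real.sqrt (3 * (d : ℝ)^2 - d) - d) / (2 * d - 1) < γ) (hγu : γ ≤ 1 / 2) :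
    ∃ (n : ℕ) (β : ℕ → ℝ), 1 ≤ n ∧
      (∀ j, 1 ≤ j → j ≤ n → β j ∈ Set.Ioo (1 / (1 + γ)) 1) ∧
      (∀ j k, 1 ≤ j → j < k → k ≤ n → β j < β k) ∧
      β 1 < 2 * γ ∧
      (∀ j, 1 ≤ j → j ≤ n - 1 →
        β (j + 1) < γ + d * (β j - 1 / (1 + γ)) * (1 + γ) / γ) ∧
      1 < γ + d * (β n - 1 / (1 + γ)) * (1 + γ) / γ := by
  classical
  have hd2 : (2:ℝ) ≤ (d:ℝ) := by exact_mod_cast hd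
  have hdd : (0:ℝ) < 2*(d:ℝ) - 1 := by linarith
  have hsd : (d:ℝ) ≤ Real.sqrt (3*(d:ℝ)^2 - d) :=
    Real.le_sqrt_of_sq_le (by nlinarith)
  have hγ0 : 0 < γ := lt_of_le_of_lt (div_nonneg (by linarith) hdd.le) hγl
  have h1γ : (0:ℝ) < 1 + γ := by linarith
  have hK : (d:ℝ) < (2*(d:ℝ)-1)*γ^2 + 2*(d:ℝ)*γ := by
    have h3d : (0:ℝ) ≤ 3*(d:ℝ)^2 - (d:ℝ) := by nlinarith
    have hsq : Real.sqrt (3*(d:ℝ)^2 - d) < (2*(d:ℝ)-1)*γ + d := by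
      rw [div_lt_iff₀ hdd] at hγl; linarith
    have h2 : 3*(d:ℝ)^2 - d < ((2*(d:ℝ)-1)*γ + d)^2 := by
      nlinarith [Real.sq_sqrt h3d, Real.sqrt_nonneg (3*(d:ℝ)^2 - d), hsq]
    nlinarith [h2, hdd, hγ0]
  clear hγl hsd
  have hq : 0 < 2*γ^2 + 2*γ - 1 := by nlinarith
  have hP : 0 < (d:ℝ)*(2*γ^2+2*γ-1) - γ^2 := by nlinarith
  obtain ⟨a, ha_def⟩ : ∃ a : ℝ, a = 1/(1+γ) := ⟨_, rfl⟩
  have haγ : a * (1+γ) = 1 := by rw [ha_def]; field_simp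
  have ha2γ : a < 2*γ := by rw [ha_def, div_lt_iff₀ h1γ]; nlinarith
  have ha0 : 0 < a := by rw [ha_def]; positivity
  obtain ⟨ε, hε_def⟩ : ∃ ε : ℝ, ε = ((d:ℝ)*(2*γ^2+2*γ-1) - γ^2)/(4*γ) := ⟨_, rfl⟩
  have hε0 : 0 < ε := by rw [hε_def]; exact div_pos hP (by linarith)
  have hε' : 4*(ε*γ) = (d:ℝ)*(2*γ^2+2*γ-1) - γ^2 := by
    rw [hε_def]; field_simp
  have hs0 : (0:ℝ) < (d:ℝ)*(1+γ) := by nlinarith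
  obtain ⟨η, hη_def⟩ : ∃ η : ℝ,
      η = min (((d:ℝ)*(2*γ^2+2*γ-1) - γ^2)/(2*((d:ℝ)*(1+γ)))) ((2*γ - a)/2) := ⟨_, rfl⟩
  have hη0 : 0 < η := by
    rw [hη_def]; exact lt_min (div_pos hP (by linarith)) (by linarith)
  have hη2 : η ≤ (2*γ - a)/2 := hη_def ▸ min_le_right _ _
  have hsη : 2*((d:ℝ)*(1+γ)*η) ≤ (d:ℝ)*(2*γ^2+2*γ-1) - γ^2 := by
    have hη1 : η ≤ ((d:ℝ)*(2*γ^2+2*γ-1) - γ^2)/(2*((d:ℝ)*(1+γ))) :=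
      hη_def ▸ min_le_left _ _
    rw [le_div_iff₀ (by linarith)] at hη1; linarith
  obtain ⟨β1, hβ1_def⟩ : ∃ b : ℝ, b = 2*γ - η := ⟨_, rfl⟩
  have hβ1a : a < β1 := by rw [hβ1_def]; linarith
  have hβ12γ : β1 < 2*γ := by rw [hβ1_def]; linarith
  have hβ1lt1 : β1 < 1 := by linarith
  have hstep : ∀ x : ℝ, β1 ≤ x → x + 2*ε ≤ γ + (d:ℝ)*(x - a)*(1+γ)/γ := by
    intro x hx
    rw [← sub_le_iff_le_add', le_div_iff₀ hγ0]
    rw [hβ1_def] at hx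
    have hsγ : (0:ℝ) ≤ (d:ℝ)*(1+γ) - γ := by
      linarith [mul_le_mul_of_nonneg_right hd2 h1γ.le]
    have e1 : (d:ℝ)*(x - a)*(1+γ) = (d:ℝ)*(1+γ)*x - (d:ℝ) := by
      linear_combination (-(d:ℝ)) * haγ
    have key : 2*(x*γ) + ((d:ℝ)*(2*γ^2+2*γ-1) - γ^2) - 2*γ^2 ≤
        2*((d:ℝ)*(1+γ)*x) - 2*(d:ℝ) := by
      nlinarith [hsη, mul_nonneg hγ0.le hη0.le,
        mul_nonneg hsγ (by linarith : (0:ℝ) ≤ x - (2*γ - η))]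
    linarith [key, e1, hε']
  obtain ⟨m0, hm0⟩ : ∃ k : ℕ, 1 < β1 + ((k:ℝ)+2)*ε := by
    obtain ⟨k, hk⟩ := exists_nat_gt ((1 - β1)/ε)
    refine ⟨k, ?_⟩
    rw [div_lt_iff₀ hε0] at hk
    nlinarith [hε0]
  have hQ : ∃ k : ℕ, 1 < β1 + ((k:ℝ)+2)*ε := ⟨m0, hm0⟩
  obtain ⟨m, hmm⟩ : ∃ m : ℕ, m = Nat.find hQ := ⟨_, rfl⟩
  have hm : 1 < β1 + ((m:ℝ)+2)*ε := hmm ▸ Nat.find_spec hQ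
  have hub : β1 + (m:ℝ)*ε < 1 := by
    rcases Nat.eq_zero_or_pos m with h | h
    · rw [h]; push_cast; linarith
    · have hmin := Nat.find_min hQ (show m - 1 < Nat.find hQ by omega)
      push_neg at hmin
      have hc : ((m-1:ℕ):ℝ) = (m:ℝ) - 1 := by
        push_cast [Nat.cast_sub h]; ring
      rw [hc] at hmin
      linarith
  rw [← ha_def]
  refine ⟨m+1, fun j => β1 + ((j:ℝ)-1)*ε, le_add_self, ?_, ?_, ?_, ?_, ?_⟩
  · intro j hj hjn
    have hj1 : (1:ℝ) ≤ (j:ℝ) := by exact_mod_cast hj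
    have hjm : (j:ℝ) ≤ (m:ℝ)+1 := by exact_mod_cast hjn
    constructor
    · have : 0 ≤ ((j:ℝ)-1)*ε := mul_nonneg (by linarith) hε0.le
      show a < β1 + ((j:ℝ)-1)*ε
      linarith
    · have : ((j:ℝ)-1)*ε ≤ (m:ℝ)*ε :=
        mul_le_mul_of_nonneg_right (by linarith) hε0.le
      show β1 + ((j:ℝ)-1)*ε < 1
      linarith
  · intro j k hj hjk hkn
    have hjk' : (j:ℝ) < (k:ℝ) := by exact_mod_cast hjk
    have := mul_lt_mul_of_pos_right (show (j:ℝ)-1 < (k:ℝ)-1 by linarith) hε0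
    show β1 + ((j:ℝ)-1)*ε < β1 + ((k:ℝ)-1)*ε
    linarith
  · show β1 + (((1:ℕ):ℝ)-1)*ε < 2*γ
    push_cast
    linarith
  · intro j hj hjn
    have hj1 : (1:ℝ) ≤ (j:ℝ) := by exact_mod_cast hj
    have hb : β1 ≤ β1 + ((j:ℝ)-1)*ε := by
      nlinarith [mul_nonneg (show (0:ℝ) ≤ (j:ℝ)-1 by linarith) hε0.le]
    have h := hstep _ hb
    show β1 + (((j+1:ℕ):ℝ)-1)*ε < γ + (d:ℝ)*((β1 + ((j:ℝ)-1)*ε) - a)*(1+γ)/γ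
    push_cast
    linarith
  · have hb : β1 ≤ β1 + (((m+1:ℕ):ℝ)-1)*ε := by
      push_cast
      nlinarith [mul_nonneg (Nat.cast_nonneg (α := ℝ) m) hε0.le]
    have h := hstep _ hb
    show 1 < γ + (d:ℝ)*((β1 + (((m+1:ℕ):ℝ)-1)*ε) - a)*(1+γ)/γ
    push_cast at h ⊢
    linarith
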